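/- arXiv:2211.08223 — 4 statements merged into one kernel-verified Lean document; each statement's English description precedes it below -/
import Mathlib

section
/- Let K be a d-simplex in ℝ^d with diameter h_K and inradius ρ_K, and let v be a vertex of K. Then the normalized solid angle Ω_v(K) of K at v satisfies Ω_v(K) ≥ (1/d) · (ρ_K^d / h_K^d) · (ω_{d-1}/ω_d), where ω_n denotes the volume of the Euclidean unit ball in ℝ^n. -/
open MeasureTheory Metric Filter

/-- Volume of the Euclidean unit ball in `ℝ^n`. -/
noncomputable def unitBallVol (n : ℕ) : ℝ :=
  (volume (Metric.ball (0 : EuclideanSpace ℝ (Fin n)) 1)).toReal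

lemma unitBallVol_zero : unitBallVol 0 = 1 := by
  have h : (Metric.ball (0 : EuclideanSpace ℝ (Fin 0)) 1) = Set.univ := by
    ext x; simp [Subsingleton.elim x 0]
  have h2 := (EuclideanSpace.volume_preserving_symm_measurableEquiv_toLp (Fin 0)).measure_preimage
    (MeasurableSet.univ).nullMeasurableSet
  simp only [Set.preimage_univ] at h2
  rw [unitBallVol, h, h2]
  simp [volume_pi, Measure.pi_univ]

lemma unitBallVol_eq (n : ℕ) (hn : n ≠ 0) :
    unitBallVol n = Real.sqrt Real.pi ^ n / Real.Gamma (n / 2 + 1) := by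
  haveI : Nonempty (Fin n) := Fin.pos_iff_nonempty.mp (Nat.pos_of_ne_zero hn)
  rw [unitBallVol, EuclideanSpace.volume_ball]
  have h1 : (0:ℝ) ≤ Real.sqrt Real.pi ^ n / Real.Gamma (n / 2 + 1) := by
    apply div_nonneg (pow_nonneg (Real.sqrt_nonneg _) _)
    exact (Real.Gamma_pos_of_pos (by positivity : (0:ℝ) < (n:ℝ)/2+1)).le
  simp only [Fintype.card_fin] at *
  rw [ENNReal.toReal_mul, ENNReal.toReal_pow, ENNReal.toReal_ofReal zero_le_one,
    ENNReal.toReal_ofReal h1, one_pow, one_mul]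

lemma gamma_midpoint (a b : ℝ) (ha : 0 < a) (hb : 0 < b) :
    Real.Gamma ((a + b) / 2) ^ 2 ≤ Real.Gamma a * Real.Gamma b := by
  have h := Real.convexOn_log_Gamma.2 (Set.mem_Ioi.mpr ha) (Set.mem_Ioi.mpr hb)
    (by norm_num : (0:ℝ) ≤ 1/2) (by norm_num : (0:ℝ) ≤ 1/2) (by norm_num)
  simp only [Function.comp_apply, smul_eq_mul] at h
  have hm : (1/2:ℝ) * a + 1/2 * b = (a+b)/2 := by ring
  rw [hm] at h
  have hga := Real.Gamma_pos_of_pos ha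
  have hgb := Real.Gamma_pos_of_pos hb
  have hgm := Real.Gamma_pos_of_pos (by linarith : (0:ℝ) < (a+b)/2)
  calc Real.Gamma ((a+b)/2) ^ 2
      = Real.exp (Real.log (Real.Gamma ((a+b)/2)) + Real.log (Real.Gamma ((a+b)/2))) := by
        rw [Real.exp_add, Real.exp_log hgm, sq]
    _ ≤ Real.exp (Real.log (Real.Gamma a) + Real.log (Real.Gamma b)) := by
        apply Real.exp_le_exp.mpr; linarith
    _ = Real.Gamma a * Real.Gamma b := by
        rw [Real.exp_add, Real.exp_log hga, Real.exp_log hgb]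

lemma unitBallVol_succ_ineq (n : ℕ) :
    unitBallVol n ≤ (n + 1) * unitBallVol (n + 1) := by
  rcases Nat.eq_zero_or_pos n with rfl | hn
  · rw [unitBallVol_zero, unitBallVol_eq 1 one_ne_zero]
    have : Real.Gamma ((1:ℕ) / 2 + 1) = Real.sqrt Real.pi / 2 := by
      push_cast
      rw [Real.Gamma_add_one (by norm_num), Real.Gamma_one_half_eq]; ring
    rw [this]
    have hπ : (0:ℝ) < Real.sqrt Real.pi := Real.sqrt_pos.mpr Real.pi_pos
    rw [div_div_eq_mul_div, mul_comm]
    push_cast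
    rw [show √Real.pi ^ 1 * 2 / √Real.pi = 2 * (√Real.pi / √Real.pi) by ring,
      div_self hπ.ne']
    norm_num
  · have h1 := unitBallVol_eq n (Nat.pos_iff_ne_zero.mp hn)
    have h2 := unitBallVol_eq (n+1) (Nat.succ_ne_zero n)
    set x : ℝ := ((n:ℝ)+1)/2 with hx
    have hx1 : (1:ℝ) ≤ x := by
      rw [hx]; have : (1:ℝ) ≤ (n:ℝ) := by exact_mod_cast hn
      linarith
    have hx0 : (0:ℝ) < x := by linarith
    have harg1 : (n:ℝ)/2 + 1 = x + 1/2 := by rw [hx]; ring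
    have harg2 : ((n:ℕ)+1:ℝ)/2 + 1 = x + 1 := by rw [hx]
    set A := Real.Gamma (x + 1/2) with hA
    set B := Real.Gamma (x + 1) with hB
    have hApos : 0 < A := Real.Gamma_pos_of_pos (by linarith)
    have hBpos : 0 < B := Real.Gamma_pos_of_pos (by linarith)
    have hmid : B ^ 2 ≤ (x + 1/2) * A ^ 2 := by
      have h3 := gamma_midpoint (x + 1/2) (x + 3/2) (by linarith) (by linarith)
      have h4 : ((x + 1/2) + (x + 3/2)) / 2 = x + 1 := by ring
      rw [h4] at h3
      have h5 : Real.Gamma (x + 3/2) = (x + 1/2) * A := by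
        rw [hA, show x + 3/2 = (x + 1/2) + 1 by ring,
          Real.Gamma_add_one (ne_of_gt (by linarith : (0:ℝ) < x + 1/2))]
      rw [h5] at h3; nlinarith
    have hπ : (0:ℝ) < Real.sqrt Real.pi := Real.sqrt_pos.mpr Real.pi_pos
    have hπ2 : Real.sqrt Real.pi ^ 2 = Real.pi := Real.sq_sqrt Real.pi_pos.le
    have hπ3 := Real.pi_gt_three
    have key : B ≤ 2 * x * Real.sqrt Real.pi * A := by
      have hC : 0 ≤ 2 * x * Real.sqrt Real.pi * A := by positivity
      have hx4 : x + 1/2 ≤ 4 * Real.pi * x^2 := by nlinarith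
      have hsq : B ^ 2 ≤ (2 * x * Real.sqrt Real.pi * A) ^ 2 := by
        have : (2 * x * Real.sqrt Real.pi * A) ^ 2 = 4 * Real.pi * x^2 * A^2 := by
          rw [mul_pow, mul_pow, mul_pow, hπ2]; ring
        rw [this]
        nlinarith [sq_nonneg A]
      calc B = Real.sqrt (B ^ 2) := by rw [Real.sqrt_sq hBpos.le]
        _ ≤ Real.sqrt ((2 * x * Real.sqrt Real.pi * A) ^ 2) := Real.sqrt_le_sqrt hsq
        _ = 2 * x * Real.sqrt Real.pi * A := Real.sqrt_sq hC
    rw [h1, h2]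
    push_cast
    rw [harg1, harg2, ← hA, ← hB, ← mul_div_assoc, div_le_div_iff₀ hApos hBpos]
    have hx2 : (n:ℝ) + 1 = 2 * x := by rw [hx]; ring
    rw [pow_succ, hx2]
    nlinarith [mul_le_mul_of_nonneg_left key (pow_nonneg hπ.le n)]

/-- The normalized solid angle `Ω_v(K)` of a `d`-simplex `K` at a vertex `v`
(defined as the limit of `vol(K ∩ B(v,ε)) / vol(B(v,ε))` as `ε → 0⁺`) satisfies
`Ω_v(K) ≥ (1/d) (ρ_K^d / h_K^d) (ω_{d-1}/ω_d)`. -/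
theorem solid_angle_lower_bound
    (d : ℕ) (hd : 1 ≤ d)
    (v : Fin (d + 1) → EuclideanSpace ℝ (Fin d))
    (hv : AffineIndependent ℝ v)
    (K : Set (EuclideanSpace ℝ (Fin d)))
    (hK : K = convexHull ℝ (Set.range v))
    (i : Fin (d + 1))
    (ρ : ℝ) (hρ : ρ = sSup {r : ℝ | ∃ c, Metric.closedBall c r ⊆ K})
    (Ωv : ℝ)
    (hΩv : Tendsto (fun ε : ℝ =>
        (volume (K ∩ Metric.ball (v i) ε)).toReal
          / (volume (Metric.ball (v i) ε)).toReal)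
      (nhdsWithin 0 (Set.Ioi 0)) (nhds Ωv)) :
    ((d : ℝ))⁻¹ * (ρ ^ d / Metric.diam K ^ d) * (unitBallVol (d - 1) / unitBallVol d)
      ≤ Ωv := by
  have hd0 : (0:ℝ) < d := by exact_mod_cast hd
  haveI : Nonempty (Fin d) := Fin.pos_iff_nonempty.mp hd
  haveI : Nontrivial (EuclideanSpace ℝ (Fin d)) := by
    apply Module.nontrivial_of_finrank_pos (R := ℝ)
    rw [finrank_euclideanSpace_fin]; exact hd
  have hfr : Module.finrank ℝ (EuclideanSpace ℝ (Fin d)) = d := finrank_euclideanSpace_fin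
  have hKcomp : IsCompact K := hK ▸ (Set.finite_range v).isCompact_convexHull (𝕜 := ℝ)
  have hKconv : Convex ℝ K := hK ▸ convex_convexHull ℝ _
  have hvK : v i ∈ K := hK ▸ subset_convexHull ℝ _ (Set.mem_range_self i)
  have hKb : Bornology.IsBounded K := hKcomp.isBounded
  have hKvol : volume K ≠ ⊤ := hKcomp.measure_lt_top.ne
  set S := {r : ℝ | ∃ c, Metric.closedBall c r ⊆ K} with hS
  have hSmem0 : (0:ℝ) ∈ S := ⟨v i, by simp [Metric.closedBall_zero, hvK]⟩
  have hSne : S.Nonempty := ⟨0, hSmem0⟩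
  -- a unit vector
  set e : EuclideanSpace ℝ (Fin d) := EuclideanSpace.single (⟨0, hd⟩ : Fin d) (1:ℝ) with he
  have hne : ‖e‖ = 1 := by rw [he, EuclideanSpace.norm_single]; simp
  have key2 : ∀ r : ℝ, ∀ c : EuclideanSpace ℝ (Fin d), 0 ≤ r →
      Metric.closedBall c r ⊆ K → 2 * r ≤ Metric.diam K := by
    intro r c hr hc
    have h1 : c + r • e ∈ Metric.closedBall c r := by
      rw [Metric.mem_closedBall, dist_eq_norm]
      have : c + r • e - c = r • e := by module
      rw [this, norm_smul, hne, mul_one, Real.norm_of_nonneg hr]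
    have h2 : c - r • e ∈ Metric.closedBall c r := by
      rw [Metric.mem_closedBall, dist_eq_norm]
      have : c - r • e - c = (-r) • e := by module
      rw [this, norm_smul, hne, mul_one, Real.norm_eq_abs, abs_neg, abs_of_nonneg hr]
    have h3 : dist (c + r • e) (c - r • e) = 2 * r := by
      rw [dist_eq_norm]
      have : c + r • e - (c - r • e) = (2 * r) • e := by module
      rw [this, norm_smul, hne, mul_one, Real.norm_of_nonneg (by linarith)]
    rw [← h3]
    exact Metric.dist_le_diam_of_mem hKb (hc h1) (hc h2)
  have hSbdd : BddAbove S := by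
    refine ⟨Metric.diam K, fun r hr => ?_⟩
    obtain ⟨c, hc⟩ := hr
    rcases le_or_gt r 0 with h | h
    · exact h.trans Metric.diam_nonneg
    · linarith [key2 r c h.le hc]
  have hρ0 : 0 ≤ ρ := hρ ▸ le_csSup hSbdd hSmem0
  have hωdpos : 0 < unitBallVol d := by
    rw [unitBallVol]
    exact ENNReal.toReal_pos (measure_ball_pos volume 0 one_pos).ne'
      measure_ball_lt_top.ne
  have hωd1 : 0 ≤ unitBallVol (d-1) := ENNReal.toReal_nonneg
  have hων : unitBallVol (d - 1) ≤ d * unitBallVol d := by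
    have := unitBallVol_succ_ineq (d - 1)
    rwa [Nat.sub_add_cancel hd, show ((d-1:ℕ):ℝ) + 1 = d by
      rw [Nat.cast_sub hd]; push_cast; ring] at this
  have hΩ0 : 0 ≤ Ωv :=
    ge_of_tendsto hΩv (Filter.Eventually.of_forall fun ε => by positivity)
  rcases eq_or_lt_of_le hρ0 with hρz | hρpos
  · rw [← hρz, zero_pow (by omega : d ≠ 0), zero_div, mul_zero, zero_mul]
    exact hΩ0
  -- main case : ρ > 0
  have hdiam : 0 < Metric.diam K := by
    obtain ⟨r, hrS, hrgt⟩ := exists_lt_of_lt_csSup hSne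
      (by rw [← hρ]; linarith : ρ/2 < sSup S)
    obtain ⟨c, hc⟩ := hrS
    have := key2 r c (by linarith) hc
    linarith
  set h := Metric.diam K with hh
  set V := (volume K).toReal with hV
  have hV0 : 0 ≤ V := ENNReal.toReal_nonneg
  -- Step B : unitBallVol d * ρ ^ d ≤ V
  have stepB : unitBallVol d * ρ ^ d ≤ V := by
    have hstep : ∀ r : ℝ, 0 < r → r < ρ → unitBallVol d * r ^ d ≤ V := by
      intro r hr0 hrρ
      obtain ⟨r', hr'S, hrr'⟩ := exists_lt_of_lt_csSup hSne (by rw [← hρ]; exact hrρ)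
      obtain ⟨c, hc⟩ := hr'S
      have hsub : Metric.closedBall c r ⊆ K :=
        (Metric.closedBall_subset_closedBall hrr'.le).trans hc
      have hvol : volume (Metric.closedBall c r)
          = ENNReal.ofReal (r ^ d) * volume (Metric.ball (0:EuclideanSpace ℝ (Fin d)) 1) := by
        rw [Measure.addHaar_closedBall volume c hr0.le, hfr]
      have hle : volume (Metric.closedBall c r) ≤ volume K := measure_mono hsub
      rw [hvol] at hle
      have h2 := (ENNReal.toReal_le_toReal
        (a := ENNReal.ofReal (r ^ d) * volume (Metric.ball (0:EuclideanSpace ℝ (Fin d)) 1))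
        (ENNReal.mul_ne_top ENNReal.ofReal_ne_top measure_ball_lt_top.ne) hKvol).mpr hle
      rw [ENNReal.toReal_mul, ENNReal.toReal_ofReal (by positivity)] at h2
      rw [← hV] at h2
      calc unitBallVol d * r ^ d = r ^ d * unitBallVol d := by ring
        _ ≤ V := h2
    have hcont : Tendsto (fun r : ℝ => unitBallVol d * r ^ d) (nhdsWithin ρ (Set.Iio ρ))
        (nhds (unitBallVol d * ρ ^ d)) := by
      apply Tendsto.mono_left _ nhdsWithin_le_nhds
      exact ((continuous_const.mul (continuous_pow d)).tendsto ρ)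
    refine le_of_tendsto hcont ?_
    filter_upwards [Ioo_mem_nhdsLT_of_mem (by constructor <;> linarith : ρ ∈ Set.Ioc (0:ℝ) ρ)]
      with r hr
    exact hstep r hr.1 hr.2
  -- Step A : the eventual lower bound on the ratio
  have stepA : ∀ ε : ℝ, ε ∈ Set.Ioo 0 h →
      V / (h ^ d * unitBallVol d) ≤
        (volume (K ∩ Metric.ball (v i) ε)).toReal
          / (volume (Metric.ball (v i) ε)).toReal := by
    intro ε hε
    obtain ⟨hε0, hεh⟩ := hε
    set t := ε / h with ht
    have ht0 : 0 < t := div_pos hε0 hdiam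
    have ht1 : t ≤ 1 := by rw [ht, div_le_one hdiam]; exact hεh.le
    -- the homothety image
    have hsub : AffineMap.homothety (v i) t '' K ⊆ K ∩ Metric.closedBall (v i) ε := by
      rintro _ ⟨y, hy, rfl⟩
      rw [AffineMap.homothety_apply]
      simp only [vsub_eq_sub, vadd_eq_add]
      constructor
      · have heq : t • (y - v i) + v i = (1 - t) • (v i) + t • y := by module
        rw [heq]
        exact hKconv hvK hy (by linarith) ht0.le (by ring)
      · rw [Metric.mem_closedBall, dist_eq_norm, add_sub_cancel_right, norm_smul,
          Real.norm_of_nonneg ht0.le]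
        have : ‖y - v i‖ ≤ h := by
          rw [← dist_eq_norm]; exact Metric.dist_le_diam_of_mem hKb hy hvK
        calc t * ‖y - v i‖ ≤ t * h := by nlinarith
          _ = ε := by rw [ht]; field_simp
    have himg : volume (AffineMap.homothety (v i) t '' K)
        = ENNReal.ofReal (t ^ d) * volume K := by
      rw [Measure.addHaar_image_homothety, hfr, abs_of_nonneg (by positivity)]
    have hball : volume (K ∩ Metric.closedBall (v i) ε)
        ≤ volume (K ∩ Metric.ball (v i) ε) := by
      calc volume (K ∩ Metric.closedBall (v i) ε)
          ≤ volume ((K ∩ Metric.ball (v i) ε) ∪ Metric.sphere (v i) ε) := by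
            apply measure_mono
            rintro x ⟨hxK, hxB⟩
            have hxB2 : x ∈ Metric.ball (v i) ε ∪ Metric.sphere (v i) ε := by
              rw [Metric.ball_union_sphere]; exact hxB
            rcases hxB2 with h' | h'
            · exact Or.inl ⟨hxK, h'⟩
            · exact Or.inr h'
        _ ≤ volume (K ∩ Metric.ball (v i) ε) + volume (Metric.sphere (v i) ε) :=
            measure_union_le _ _
        _ = volume (K ∩ Metric.ball (v i) ε) := by
            rw [Measure.addHaar_sphere, add_zero]
    have hlow : ENNReal.ofReal (t ^ d) * volume K ≤ volume (K ∩ Metric.ball (v i) ε) := by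
      rw [← himg]
      exact (measure_mono hsub).trans hball
    have hfin : volume (K ∩ Metric.ball (v i) ε) ≠ ⊤ :=
      ((measure_mono Set.inter_subset_left).trans_lt hKvol.lt_top).ne
    have hWlow : t ^ d * V ≤ (volume (K ∩ Metric.ball (v i) ε)).toReal := by
      have := (ENNReal.toReal_le_toReal
        (ENNReal.mul_ne_top ENNReal.ofReal_ne_top hKvol) hfin).mpr hlow
      rwa [ENNReal.toReal_mul, ENNReal.toReal_ofReal (by positivity)] at this
    have hden : (volume (Metric.ball (v i) ε)).toReal = ε ^ d * unitBallVol d := by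
      rw [Measure.addHaar_ball volume (v i) hε0.le, hfr, ENNReal.toReal_mul,
        ENNReal.toReal_ofReal (by positivity)]
      rfl
    rw [hden]
    have hεd : 0 < ε ^ d := pow_pos hε0 d
    calc V / (h ^ d * unitBallVol d) = (t ^ d * V) / (ε ^ d * unitBallVol d) := by
          rw [ht, div_pow]
          field_simp
      _ ≤ (volume (K ∩ Metric.ball (v i) ε)).toReal / (ε ^ d * unitBallVol d) := by
          gcongr
  -- conclude
  have hle : V / (h ^ d * unitBallVol d) ≤ Ωv := by
    refine ge_of_tendsto hΩv ?_
    filter_upwards [Ioo_mem_nhdsGT_of_mem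
      (by constructor <;> [rfl; exact hdiam] : (0:ℝ) ∈ Set.Ico 0 h)] with ε hε
    exact stepA ε hε
  have hhd : 0 < h ^ d := pow_pos hdiam d
  have e1 : ((d:ℝ))⁻¹ * (ρ ^ d / h ^ d) * (unitBallVol (d - 1) / unitBallVol d)
      ≤ ρ ^ d / h ^ d := by
    have h1 : unitBallVol (d-1) / unitBallVol d ≤ d := by
      rw [div_le_iff₀ hωdpos]; linarith
    have hX : 0 ≤ ρ ^ d / h ^ d := by positivity
    calc ((d:ℝ))⁻¹ * (ρ ^ d / h ^ d) * (unitBallVol (d - 1) / unitBallVol d)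
        ≤ ((d:ℝ))⁻¹ * (ρ ^ d / h ^ d) * d := by
          apply mul_le_mul_of_nonneg_left h1 (by positivity)
      _ = ρ ^ d / h ^ d := by field_simp
  have e2 : ρ ^ d / h ^ d ≤ V / (h ^ d * unitBallVol d) := by
    rw [div_le_div_iff₀ hhd (by positivity)]
    calc ρ ^ d * (h ^ d * unitBallVol d) = (unitBallVol d * ρ ^ d) * h ^ d := by ring
      _ ≤ V * h ^ d := by nlinarith
  linarith
end

section
/- With the notation of the split basis: V^p(Ω_h;Γ) = V^p(Ω_h) ⊕ Ψ^p(Ω_h;Γ), where V^p(Ω_h) = V^p(Ω_h;Γ) ∩ H^1(Ω) is spanned by {φ_i}_{1≤i≤N} and Ψ^p(Ω_h;Γ) is spanned by the differences ψ_{i,j} := φ_{i,j} − φ_{i,q_i} for pairs (i,j) with q_i > 1 and 1 ≤ j ≤ q_i − 1; moreover a linear combination Σ_j λ_j φ_{i,j} belongs to H^1(Ω) if and only if all λ_j are equal. -/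
open scoped Classical

namespace SplitBasis

/-- The convex hull of a finite vertex set. -/
def shull (d : ℕ) (K : Finset (EuclideanSpace ℝ (Fin d))) : Set (EuclideanSpace ℝ (Fin d)) :=
  convexHull ℝ (K : Set (EuclideanSpace ℝ (Fin d)))

/-- The star of a point `x` in the mesh `M`. -/
noncomputable def star (d : ℕ) (M : Finset (Finset (EuclideanSpace ℝ (Fin d))))
    (x : EuclideanSpace ℝ (Fin d)) : Finset (Finset (EuclideanSpace ℝ (Fin d))) :=
  M.filter fun K => x ∈ shull d K

/-- Two elements of the star of `x` lie on the same side of `Γ` if they are joined by a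
chain of star elements in which consecutive elements share a face not in `Γ_h`. -/
def SameSide (d : ℕ) (M : Finset (Finset (EuclideanSpace ℝ (Fin d))))
    (Γh : Finset (Finset (EuclideanSpace ℝ (Fin d)))) (x : EuclideanSpace ℝ (Fin d))
    (K K' : Finset (EuclideanSpace ℝ (Fin d))) : Prop :=
  Relation.ReflTransGen
    (fun A B => A ∈ star d M x ∧ B ∈ star d M x ∧ (A ∩ B).card = d ∧ (A ∩ B) ∉ Γh) K K'

/-- Lagrange nodes of degree `p` on the simplex with vertex set `K`. -/
def lagrangeNodes (d p : ℕ) (K : Finset (EuclideanSpace ℝ (Fin d))) :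
    Set (EuclideanSpace ℝ (Fin d)) :=
  {x | ∃ α : EuclideanSpace ℝ (Fin d) → ℕ, (∀ w, α w ≠ 0 → w ∈ K) ∧
    (∑ w ∈ K, α w) = p ∧ x = (p : ℝ)⁻¹ • ∑ w ∈ K, (α w : ℝ) • w}

/-! ### Auxiliary lemmas -/

lemma isClosed_shull (d : ℕ) (K : Finset (EuclideanSpace ℝ (Fin d))) : IsClosed (shull d K) :=
  K.finite_toSet.isClosed_convexHull (𝕜 := ℝ)

lemma convex_shull (d : ℕ) (K : Finset (EuclideanSpace ℝ (Fin d))) : Convex ℝ (shull d K) :=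
  convex_convexHull ℝ _

lemma span_top (d : ℕ) (K : Finset (EuclideanSpace ℝ (Fin d))) (hcard : K.card = d + 1)
    (hind : AffineIndependent ℝ (fun y : {y // y ∈ K} => (y : EuclideanSpace ℝ (Fin d)))) :
    affineSpan ℝ (shull d K) = ⊤ := by
  rw [shull, affineSpan_convexHull]
  have hiff : (K : Set (EuclideanSpace ℝ (Fin d))) =
      Set.range (fun y : {y // y ∈ K} => (y : EuclideanSpace ℝ (Fin d))) := by
    simp [Subtype.range_coe]
  rw [hiff, hind.affineSpan_eq_top_iff_card_eq_finrank_add_one]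
  simp [finrank_euclideanSpace_fin, hcard]

lemma interior_nonempty (d : ℕ) (K : Finset (EuclideanSpace ℝ (Fin d))) (hcard : K.card = d + 1)
    (hind : AffineIndependent ℝ (fun y : {y // y ∈ K} => (y : EuclideanSpace ℝ (Fin d)))) :
    (interior (shull d K)).Nonempty := by
  rw [(convex_shull d K).interior_nonempty_iff_affineSpan_eq_top]
  exact span_top d K hcard hind

lemma dense_interior (d : ℕ) (K : Finset (EuclideanSpace ℝ (Fin d))) (hcard : K.card = d + 1)
    (hind : AffineIndependent ℝ (fun y : {y // y ∈ K} => (y : EuclideanSpace ℝ (Fin d)))) :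
    shull d K ⊆ closure (interior (shull d K)) := by
  obtain ⟨y, hy⟩ := interior_nonempty d K hcard hind
  intro x hx
  have hseq : ∀ n : ℕ, x + ((n : ℝ) + 1)⁻¹ • (y - x) ∈ interior (shull d K) := by
    intro n
    refine (convex_shull d K).add_smul_sub_mem_interior hx hy ⟨by positivity, ?_⟩
    rw [inv_le_one_iff₀]
    right; linarith [Nat.cast_nonneg (α := ℝ) n]
  have htend : Filter.Tendsto (fun n : ℕ => x + ((n : ℝ) + 1)⁻¹ • (y - x))
      Filter.atTop (nhds x) := by
    have h0 : Filter.Tendsto (fun n : ℕ => ((n : ℝ) + 1)⁻¹) Filter.atTop (nhds 0) :=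
      tendsto_one_div_add_atTop_nhds_zero_nat.congr (by intro n; rw [one_div])
    have := (h0.smul_const (y - x)).const_add x
    simpa using this
  exact mem_closure_of_tendsto htend (Filter.Eventually.of_forall hseq)

lemma interior_small_empty (d : ℕ) (hd : 1 ≤ d) (F : Finset (EuclideanSpace ℝ (Fin d)))
    (hF : F.card ≤ d) : interior (shull d F) = ∅ := by
  by_contra h
  obtain ⟨y, hy⟩ := Set.nonempty_iff_ne_empty.2 h
  have htop : affineSpan ℝ (shull d F) = ⊤ :=
    (convex_shull d F).interior_nonempty_iff_affineSpan_eq_top.mp ⟨y, hy⟩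
  rw [shull, affineSpan_convexHull] at htop
  rcases Finset.eq_empty_or_nonempty F with hFe | hFne
  · rw [hFe] at htop
    simp only [Finset.coe_empty, AffineSubspace.span_empty] at htop
    exact AffineSubspace.bot_ne_top ℝ (EuclideanSpace ℝ (Fin d)) _ htop
  · have hcard : F.card = (F.card - 1) + 1 :=
      (Nat.succ_pred_eq_of_pos (Finset.card_pos.2 hFne)).symm
    have hvs : vectorSpan ℝ (F : Set (EuclideanSpace ℝ (Fin d))) = ⊤ :=
      AffineSubspace.vectorSpan_eq_top_of_affineSpan_eq_top ℝ _ _ htop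
    have hle : Module.finrank ℝ (vectorSpan ℝ (F : Set (EuclideanSpace ℝ (Fin d))))
        ≤ F.card - 1 := by
      have hiff : (F : Set (EuclideanSpace ℝ (Fin d))) =
          Set.range (fun y : {y // y ∈ F} => (y : EuclideanSpace ℝ (Fin d))) := by
        simp [Subtype.range_coe]
      rw [hiff]
      exact finrank_vectorSpan_range_le ℝ _ (by simp [Fintype.card_coe, ← hcard])
    rw [hvs, finrank_top, finrank_euclideanSpace_fin] at hle
    omega

lemma interiors_disjoint (d : ℕ) (hd : 1 ≤ d) (M : Finset (Finset (EuclideanSpace ℝ (Fin d))))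
    (hsimp : ∀ K ∈ M, K.card = d + 1 ∧
      AffineIndependent ℝ (fun y : {y // y ∈ K} => (y : EuclideanSpace ℝ (Fin d))))
    (hconf : ∀ K ∈ M, ∀ K' ∈ M, shull d K ∩ shull d K' = shull d (K ∩ K'))
    {K K' : Finset (EuclideanSpace ℝ (Fin d))} (hK : K ∈ M) (hK' : K' ∈ M)
    {x : EuclideanSpace ℝ (Fin d)} (hx : x ∈ interior (shull d K))
    (hx' : x ∈ interior (shull d K')) : K = K' := by
  by_contra hne
  have hcK := (hsimp K hK).1
  have hcK' := (hsimp K' hK').1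
  have hcap : (K ∩ K').card ≤ d := by
    by_contra hc
    push_neg at hc
    have h1 : K ∩ K' = K := Finset.eq_of_subset_of_card_le Finset.inter_subset_left (by omega)
    have h2 : K ∩ K' = K' := Finset.eq_of_subset_of_card_le Finset.inter_subset_right (by omega)
    exact hne (h1.symm.trans h2)
  have hxint : x ∈ interior (shull d (K ∩ K')) := by
    rw [← hconf K hK K' hK', interior_inter]
    exact ⟨hx, hx'⟩
  rw [interior_small_empty d hd _ hcap] at hxint
  exact hxint

lemma poly_cont (d : ℕ) (P : MvPolynomial (Fin d) ℝ) :
    Continuous fun x : EuclideanSpace ℝ (Fin d) => MvPolynomial.eval (fun j => x j) P :=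
  P.continuous_eval.comp (continuous_pi fun j =>
    (EuclideanSpace.proj j : EuclideanSpace ℝ (Fin d) →L[ℝ] ℝ).continuous)

lemma node_mem_shull (d p : ℕ) (hp : 1 ≤ p) (K : Finset (EuclideanSpace ℝ (Fin d)))
    {y : EuclideanSpace ℝ (Fin d)} (hy : y ∈ lagrangeNodes d p K) : y ∈ shull d K := by
  obtain ⟨α, hαK, hαsum, hyeq⟩ := hy
  have hsum : ∑ w ∈ K, ((α w : ℝ)) = (p : ℝ) := by rw [← hαsum]; push_cast; ring
  have hcm : y = K.centerMass (fun w => (α w : ℝ)) id := by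
    rw [Finset.centerMass, hsum, hyeq]; simp [id]
  rw [hcm]
  exact Finset.centerMass_mem_convexHull K (fun w _ => by positivity)
    (by rw [hsum]; exact_mod_cast Nat.lt_of_lt_of_le Nat.zero_lt_one hp)
    (fun w hw => hw)

lemma eqOn_of_eqOn_interior {E' : Type*} [TopologicalSpace E'] {s : Set E'} {f g : E' → ℝ}
    (hs : s ⊆ closure (interior s)) (hf : ContinuousOn f s) (hg : ContinuousOn g s)
    (h : Set.EqOn f g (interior s)) : Set.EqOn f g s := by
  intro y hy
  have hne : (nhdsWithin y (interior s)).NeBot := mem_closure_iff_nhdsWithin_neBot.mp (hs hy)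
  have hf' : Filter.Tendsto f (nhdsWithin y (interior s)) (nhds (f y)) :=
    (hf y hy).mono interior_subset
  have hg' : Filter.Tendsto g (nhdsWithin y (interior s)) (nhds (g y)) :=
    (hg y hy).mono interior_subset
  have hfg : Filter.Tendsto f (nhdsWithin y (interior s)) (nhds (g y)) :=
    hg'.congr' (eventually_nhdsWithin_of_forall fun x hx => (h hx).symm)
  exact tendsto_nhds_unique hf' hfg

/-- Decomposition `V^p(Ω_h;Γ) = V^p(Ω_h) ⊕ Ψ^p(Ω_h;Γ)` in terms of the split basis
(functions are compared on the union of the open mesh cells, i.e. up to the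
measure-zero mesh skeleton, so the continuous nodal functions `φ_i` are truncated to
that union), and characterization: `Σ_j λ_j φ_{i,j}` belongs to `H¹(Ω)` (i.e. extends
continuously to `Ω̄`, which for piecewise polynomials is equivalent) iff all `λ_j`
coincide. -/
theorem continuous_plus_jump_decomposition
    (d p : ℕ) (hd : 1 ≤ d) (hp : 1 ≤ p)
    (M : Finset (Finset (EuclideanSpace ℝ (Fin d))))
    (hsimp : ∀ K ∈ M, K.card = d + 1 ∧
      AffineIndependent ℝ (fun y : {y // y ∈ K} => (y : EuclideanSpace ℝ (Fin d))))
    (hconf : ∀ K ∈ M, ∀ K' ∈ M, shull d K ∩ shull d K' = shull d (K ∩ K'))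
    (Γh : Finset (Finset (EuclideanSpace ℝ (Fin d))))
    (hΓh : ∀ F ∈ Γh, F.card = d ∧ ∃ K ∈ M, F ⊆ K)
    (Γ : Set (EuclideanSpace ℝ (Fin d)))
    (hΓ : Γ = ⋃ F ∈ Γh, shull d F)
    (N : ℕ) (xn : Fin N → EuclideanSpace ℝ (Fin d))
    (hxn_inj : Function.Injective xn)
    (hxn_mem : ∀ i, ∃ K ∈ M, xn i ∈ lagrangeNodes d p K)
    (hxn_surj : ∀ K ∈ M, ∀ y ∈ lagrangeNodes d p K, ∃ i, xn i = y)
    (φ : Fin N → EuclideanSpace ℝ (Fin d) → ℝ)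
    (hφ_poly : ∀ i, ∀ K ∈ M, ∃ P : MvPolynomial (Fin d) ℝ, P.totalDegree ≤ p ∧
      ∀ x ∈ shull d K, φ i x = MvPolynomial.eval (fun j => x j) P)
    (hφ_supp : ∀ i, ∀ K ∈ M, K ∉ star d M (xn i) → ∀ x ∈ shull d K, φ i x = 0)
    (hφ_nodal : ∀ i i', φ i (xn i') = if i = i' then 1 else 0)
    (q : Fin N → ℕ) (side : Fin N → Finset (EuclideanSpace ℝ (Fin d)) → ℕ)
    (hq_pos : ∀ i, 1 ≤ q i)
    (hside_lt : ∀ i, ∀ K ∈ star d M (xn i), side i K < q i)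
    (hside_surj : ∀ i, ∀ j < q i, ∃ K ∈ star d M (xn i), side i K = j)
    (hside_eq : ∀ i, ∀ K ∈ star d M (xn i), ∀ K' ∈ star d M (xn i),
      (side i K = side i K' ↔ SameSide d M Γh (xn i) K K'))
    (φs : Fin N → ℕ → EuclideanSpace ℝ (Fin d) → ℝ)
    (hφs : ∀ i j x, φs i j x =
      if ∃ K ∈ star d M (xn i), side i K = j ∧ x ∈ interior (shull d K)
      then φ i x else 0)
    -- the truncation of the continuous nodal basis to the union of the open cells
    (φc : Fin N → EuclideanSpace ℝ (Fin d) → ℝ)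
    (hφc : ∀ i x, φc i x =
      if x ∈ ⋃ K ∈ M, interior (shull d K) then φ i x else 0)
    -- the jump functions `ψ_{i,j} = φ_{i,j} - φ_{i,q_i}` for `q_i > 1`, `j < q_i - 1`
    (ψ : {ij : Fin N × ℕ // 1 < q ij.1 ∧ ij.2 + 1 < q ij.1} →
      EuclideanSpace ℝ (Fin d) → ℝ)
    (hψ : ∀ ij, ψ ij = fun x => φs ij.1.1 ij.1.2 x - φs ij.1.1 (q ij.1.1 - 1) x) :
    (Submodule.span ℝ (Set.range fun ij : (i : Fin N) × Fin (q i) => φs ij.1 ij.2) =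
        Submodule.span ℝ (Set.range φc) ⊔ Submodule.span ℝ (Set.range ψ)) ∧
    (Submodule.span ℝ (Set.range φc) ⊓ Submodule.span ℝ (Set.range ψ) = ⊥) ∧
    (∀ i : Fin N, ∀ lam : Fin (q i) → ℝ,
      (∃ vcont : EuclideanSpace ℝ (Fin d) → ℝ,
          ContinuousOn vcont (⋃ K ∈ M, shull d K) ∧
          ∀ x ∈ ⋃ K ∈ M, interior (shull d K),
            vcont x = ∑ j : Fin (q i), lam j * φs i j x) ↔
        ∀ j j' : Fin (q i), lam j = lam j') := by
  classical
  -- membership in the star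
  have hstar_mem : ∀ (z : EuclideanSpace ℝ (Fin d)) K, K ∈ star d M z → K ∈ M ∧ z ∈ shull d K :=
    fun z K hK => Finset.mem_filter.mp hK
  have huniq : ∀ {K K' : Finset (EuclideanSpace ℝ (Fin d))}, K ∈ M → K' ∈ M →
      ∀ {x}, x ∈ interior (shull d K) → x ∈ interior (shull d K') → K = K' :=
    by
    intro K K' hK hK' x hx hx'
    exact interiors_disjoint d hd M hsimp hconf hK hK' hx hx'
  -- continuity of the nodal functions on each cell
  have hφcont : ∀ (i : Fin N) K, K ∈ M → ContinuousOn (φ i) (shull d K) := by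
    intro i K hK
    obtain ⟨P, -, hP⟩ := hφ_poly i K hK
    exact (poly_cont d P).continuousOn.congr fun x hx => hP x hx
  -- values of the split basis functions on the interior of a cell
  have hφs_int : ∀ (i : Fin N) (j : ℕ) K, K ∈ M → ∀ x ∈ interior (shull d K),
      φs i j x = if K ∈ star d M (xn i) ∧ side i K = j then φ i x else 0 := by
    intro i j K hKM x hx
    rw [hφs]
    by_cases h : ∃ K' ∈ star d M (xn i), side i K' = j ∧ x ∈ interior (shull d K')
    · obtain ⟨K', hK', hsd, hx'⟩ := h
      have hKK : K' = K := huniq (hstar_mem _ _ hK').1 hKM hx' hx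
      subst hKK
      rw [if_pos ⟨K', hK', hsd, hx'⟩, if_pos ⟨hK', hsd⟩]
    · rw [if_neg h, if_neg]
      rintro ⟨hKs, hsd⟩
      exact h ⟨K, hKs, hsd, hx⟩
  -- master sum formula on the interior of a cell
  have hmaster : ∀ (i : Fin N) (c : Fin (q i) → ℝ) K, K ∈ M → ∀ x ∈ interior (shull d K),
      ∑ j : Fin (q i), c j * φs i (j : ℕ) x =
        if hKs : K ∈ star d M (xn i) then c ⟨side i K, hside_lt i K hKs⟩ * φ i x else 0 := by
    intro i c K hKM x hx
    by_cases hKs : K ∈ star d M (xn i)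
    · rw [dif_pos hKs]
      rw [Finset.sum_eq_single (⟨side i K, hside_lt i K hKs⟩ : Fin (q i))]
      · rw [hφs_int i _ K hKM x hx, if_pos ⟨hKs, rfl⟩]
      · intro j _ hj
        rw [hφs_int i _ K hKM x hx, if_neg, mul_zero]
        rintro ⟨-, hsd⟩
        exact hj (Fin.ext hsd.symm)
      · intro hj; exact absurd (Finset.mem_univ _) hj
    · rw [dif_neg hKs]
      apply Finset.sum_eq_zero
      intro j _
      rw [hφs_int i _ K hKM x hx, if_neg, mul_zero]
      rintro ⟨hKs', -⟩; exact hKs hKs'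
  -- the sum of the split basis functions is the truncated nodal function
  have hsum : ∀ (i : Fin N) x, ∑ j : Fin (q i), φs i (j : ℕ) x = φc i x := by
    intro i x
    rw [hφc]
    by_cases hx : x ∈ ⋃ K ∈ M, interior (shull d K)
    · rw [if_pos hx]
      obtain ⟨K, hKM, hxK⟩ : ∃ K ∈ M, x ∈ interior (shull d K) := by
        simpa using hx
      have hm := hmaster i (fun _ => (1 : ℝ)) K hKM x hxK
      simp only [one_mul] at hm
      rw [hm]
      by_cases hKs : K ∈ star d M (xn i)
      · rw [dif_pos hKs]
      · rw [dif_neg hKs]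
        exact (hφ_supp i K hKM hKs x (interior_subset hxK)).symm
    · rw [if_neg hx]
      apply Finset.sum_eq_zero
      intro j _
      rw [hφs, if_neg]
      rintro ⟨K', hK', -, hx'⟩
      exact hx (Set.mem_biUnion (hstar_mem _ _ hK').1 hx')
  have hφc_sum : ∀ i : Fin N, φc i = ∑ j : Fin (q i), φs i (j : ℕ) := by
    intro i
    funext x
    rw [← hsum i x, Finset.sum_apply]
  refine ⟨?_, ?_, ?_⟩
  · -- span equality
    apply le_antisymm
    · -- `φs i j` lies in the sup
      have hFmem : ∀ i : Fin N, φs i (q i - 1) ∈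
          Submodule.span ℝ (Set.range φc) ⊔ Submodule.span ℝ (Set.range ψ) := by
        intro i
        obtain ⟨n, hqn⟩ : ∃ n, q i = n + 1 := ⟨q i - 1, by have := hq_pos i; omega⟩
        have hn' : q i - 1 = n := by omega
        rw [hn']
        have key : (q i : ℝ) • φs i n =
            φc i - ∑ j ∈ (Finset.range n).attach,
              ψ ⟨(i, (j : ℕ)), by
                have hj := Finset.mem_range.mp j.2
                exact ⟨show 1 < q i by omega, show (j : ℕ) + 1 < q i by omega⟩⟩ := by
          funext x
          have h1 : φc i x = (∑ j ∈ Finset.range n, φs i j x) + φs i n x := by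
            rw [← hsum i x, Fin.sum_univ_eq_sum_range (fun j => φs i j x) (q i), hqn,
              Finset.sum_range_succ]
          have h2 : ∀ j ∈ (Finset.range n).attach,
              (ψ ⟨(i, (j : ℕ)), by
                have hj := Finset.mem_range.mp j.2
                exact ⟨show 1 < q i by omega, show (j : ℕ) + 1 < q i by omega⟩⟩) x
              = φs i (j : ℕ) x - φs i (q i - 1) x := by
            intro j _
            rw [hψ]
          simp only [Pi.smul_apply, Pi.sub_apply, smul_eq_mul, Finset.sum_apply]
          rw [h1, Finset.sum_congr rfl h2]
          simp only [hn']
          rw [Finset.sum_sub_distrib, Finset.sum_attach (Finset.range n) (fun j => φs i j x)]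
          simp only [Finset.sum_const, Finset.card_attach, Finset.card_range, nsmul_eq_mul]
          have hcast : ((q i : ℝ)) = (n : ℝ) + 1 := by exact_mod_cast congrArg Nat.cast hqn
          rw [hcast]
          ring
        have hmem : (q i : ℝ) • φs i n ∈
            Submodule.span ℝ (Set.range φc) ⊔ Submodule.span ℝ (Set.range ψ) := by
          rw [key]
          exact Submodule.sub_mem _ (Submodule.mem_sup_left (Submodule.subset_span ⟨i, rfl⟩))
            (Submodule.sum_mem _ fun j _ =>
              Submodule.mem_sup_right (Submodule.subset_span ⟨_, rfl⟩))
        have hne : ((q i : ℝ)) ≠ 0 := by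
          have := hq_pos i
          positivity
        have hout := Submodule.smul_mem
          (Submodule.span ℝ (Set.range φc) ⊔ Submodule.span ℝ (Set.range ψ)) ((q i : ℝ))⁻¹ hmem
        rwa [inv_smul_smul₀ hne] at hout
      rw [Submodule.span_le]
      rintro _ ⟨⟨i, j⟩, rfl⟩
      simp only [SetLike.mem_coe]
      rcases eq_or_ne (j : ℕ) (q i - 1) with hj | hj
      · rw [hj]; exact hFmem i
      · have h2 : (j : ℕ) + 1 < q i := by have := j.2; omega
        have h1 : 1 < q i := by omega
        have hsplit : φs i (j : ℕ) = ψ ⟨(i, (j : ℕ)), ⟨h1, h2⟩⟩ + φs i (q i - 1) := by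
          funext x
          simp [hψ]
        rw [hsplit]
        exact Submodule.add_mem _
          (Submodule.mem_sup_right (Submodule.subset_span ⟨_, rfl⟩)) (hFmem i)
    · apply sup_le <;> rw [Submodule.span_le]
      · rintro _ ⟨i, rfl⟩
        simp only [SetLike.mem_coe]
        rw [hφc_sum i]
        exact Submodule.sum_mem _ fun j _ => Submodule.subset_span ⟨⟨i, j⟩, rfl⟩
      · rintro _ ⟨ij, rfl⟩
        simp only [SetLike.mem_coe]
        obtain ⟨⟨i, j⟩, h1, h2⟩ := ij
        have h1' : 1 < q i := h1
        have h2' : j + 1 < q i := h2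
        have hsub : ψ ⟨(i, j), ⟨h1, h2⟩⟩ = φs i j - φs i (q i - 1) := by
          funext x
          simp [hψ]
        rw [hsub]
        exact Submodule.sub_mem _ (Submodule.subset_span ⟨⟨i, ⟨j, by omega⟩⟩, rfl⟩)
          (Submodule.subset_span ⟨⟨i, ⟨q i - 1, by omega⟩⟩, rfl⟩)
  · -- trivial intersection
    rw [eq_bot_iff]
    rintro f ⟨hf1, hf2⟩
    rw [Submodule.mem_bot]
    obtain ⟨a, ha⟩ := (Submodule.mem_span_range_iff_exists_fun ℝ).mp hf1
    obtain ⟨b, hb⟩ := Finsupp.mem_span_range_iff_exists_finsupp.mp hf2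
    have hdense : ∀ K ∈ M, shull d K ⊆ closure (interior (shull d K)) := fun K hK =>
      dense_interior d K (hsimp K hK).1 (hsimp K hK).2
    have hval : ∀ (i : Fin N) K, K ∈ star d M (xn i) →
        a i = ∑ ij ∈ b.support, b ij *
          (((if K ∈ star d M (xn ij.1.1) ∧ side ij.1.1 K = ij.1.2 then (1:ℝ) else 0) -
            (if K ∈ star d M (xn ij.1.1) ∧ side ij.1.1 K = q ij.1.1 - 1 then (1:ℝ) else 0)) *
            (if ij.1.1 = i then (1:ℝ) else 0)) := by
      intro i K hKs
      obtain ⟨hKM, hxi⟩ := hstar_mem _ _ hKs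
      set g : EuclideanSpace ℝ (Fin d) → ℝ := fun x => ∑ i', a i' * φ i' x with hg
      set gj : EuclideanSpace ℝ (Fin d) → ℝ := fun x => ∑ ij ∈ b.support, b ij *
          (((if K ∈ star d M (xn ij.1.1) ∧ side ij.1.1 K = ij.1.2 then (1:ℝ) else 0) -
            (if K ∈ star d M (xn ij.1.1) ∧ side ij.1.1 K = q ij.1.1 - 1 then (1:ℝ) else 0)) *
            φ ij.1.1 x) with hgj
      have hcg : ContinuousOn g (shull d K) :=
        continuousOn_finset_sum _ fun i' _ => continuousOn_const.mul (hφcont i' K hKM)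
      have hcgj : ContinuousOn gj (shull d K) :=
        continuousOn_finset_sum _ fun ij _ =>
          continuousOn_const.mul (continuousOn_const.mul (hφcont ij.1.1 K hKM))
      have heq : Set.EqOn g gj (interior (shull d K)) := by
        intro x hx
        have hxU : x ∈ ⋃ K ∈ M, interior (shull d K) := Set.mem_biUnion hKM hx
        have hfx1 : f x = g x := by
          rw [← ha]
          simp only [Finset.sum_apply, Pi.smul_apply, smul_eq_mul, hg]
          refine Finset.sum_congr rfl fun i' _ => ?_
          rw [hφc i' x, if_pos hxU]
        have hfx2 : f x = gj x := by
          rw [← hb, Finsupp.sum, Finset.sum_apply]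
          refine Finset.sum_congr rfl fun ij _ => ?_
          simp only [Pi.smul_apply, smul_eq_mul]
          rw [hψ ij]
          simp only []
          rw [hφs_int ij.1.1 ij.1.2 K hKM x hx, hφs_int ij.1.1 (q ij.1.1 - 1) K hKM x hx]
          split_ifs <;> ring
        rw [← hfx1, hfx2]
      have hnode := eqOn_of_eqOn_interior (hdense K hKM) hcg hcgj heq hxi
      simp only [hg, hgj] at hnode
      have hgval : ∑ i', a i' * φ i' (xn i) = a i := by
        rw [Finset.sum_congr rfl (fun i' _ => by rw [hφ_nodal i' i])]
        simp
      rw [hgval] at hnode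
      rw [hnode]
      refine Finset.sum_congr rfl fun ij _ => ?_
      rw [hφ_nodal ij.1.1 i]
    have hazero : ∀ i, a i = 0 := by
      intro i
      -- the value of `b` at every admissible pair `(i, jj)` equals `a i`
      have hbj : ∀ jj (hc : 1 < q i ∧ jj + 1 < q i), b ⟨(i, jj), hc⟩ = a i := by
        intro jj hc
        obtain ⟨Kj, hKjs, hKjside⟩ := hside_surj i jj (by omega)
        have hA := hval i Kj hKjs
        have hstep : a i = if (⟨(i, jj), hc⟩ : {ij : Fin N × ℕ // 1 < q ij.1 ∧ ij.2 + 1 < q ij.1})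
            ∈ b.support then b ⟨(i, jj), hc⟩ else 0 := by
          rw [hA, ← Finset.sum_ite_eq' b.support
            (⟨(i, jj), hc⟩ : {ij : Fin N × ℕ // 1 < q ij.1 ∧ ij.2 + 1 < q ij.1}) (fun e => b e)]
          refine Finset.sum_congr rfl fun ij _ => ?_
          rcases ij with ⟨⟨i', jj'⟩, hc'⟩
          dsimp only
          by_cases hpart : i' = i
          · subst hpart
            have hc'2 : jj' + 1 < q i' := hc'.2
            have hc2 : jj + 1 < q i' := hc.2
            have e2 : (if Kj ∈ star d M (xn i') ∧ side i' Kj = q i' - 1 then (1:ℝ) else 0)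
                = 0 := by
              rw [if_neg]
              rintro ⟨-, hsd⟩
              rw [hKjside] at hsd
              omega
            have e3 : (if i' = i' then (1:ℝ) else 0) = 1 := if_pos rfl
            have e1 : (if Kj ∈ star d M (xn i') ∧ side i' Kj = jj' then (1:ℝ) else 0)
                = (if (⟨(i', jj'), hc'⟩ : {ij : Fin N × ℕ // 1 < q ij.1 ∧ ij.2 + 1 < q ij.1})
                    = ⟨(i', jj), hc⟩ then (1:ℝ) else 0) := by
              by_cases hjj : jj' = jj
              · subst hjj
                rw [if_pos ⟨hKjs, hKjside⟩, if_pos rfl]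
              · rw [if_neg, if_neg]
                · simp only [Subtype.mk.injEq, Prod.mk.injEq]
                  tauto
                · rintro ⟨-, hsd⟩
                  rw [hKjside] at hsd
                  exact hjj hsd.symm
            rw [e1, e2, e3]
            split_ifs <;> ring
          · have e3 : (if i' = i then (1:ℝ) else 0) = 0 := if_neg hpart
            have e4 : (if (⟨(i', jj'), hc'⟩ : {ij : Fin N × ℕ // 1 < q ij.1 ∧ ij.2 + 1 < q ij.1})
                = ⟨(i, jj), hc⟩ then b ⟨(i', jj'), hc'⟩ else 0) = 0 := by
              rw [if_neg]
              simp only [Subtype.mk.injEq, Prod.mk.injEq]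
              tauto
            rw [e3, e4, mul_zero, mul_zero]
        by_cases hmem : (⟨(i, jj), hc⟩ : {ij : Fin N × ℕ // 1 < q ij.1 ∧ ij.2 + 1 < q ij.1})
            ∈ b.support
        · rw [hstep, if_pos hmem]
        · rw [Finsupp.notMem_support_iff.mp hmem, hstep, if_neg hmem]
      -- evaluation at an element on the last side
      obtain ⟨K₀, hK₀s, hK₀side⟩ := hside_surj i (q i - 1) (by have := hq_pos i; omega)
      have hA := hval i K₀ hK₀s
      have hS : a i = -∑ ij ∈ b.support.filter (fun ij => ij.1.1 = i), b ij := by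
        rw [hA, Finset.sum_filter, ← Finset.sum_neg_distrib]
        refine Finset.sum_congr rfl fun ij _ => ?_
        rcases ij with ⟨⟨i', jj⟩, hc⟩
        dsimp only
        by_cases hpart : i' = i
        · subst hpart
          have hc2 : jj + 1 < q i' := hc.2
          have e1 : (if K₀ ∈ star d M (xn i') ∧ side i' K₀ = jj then (1:ℝ) else 0) = 0 := by
            rw [if_neg]
            rintro ⟨-, hsd⟩
            rw [hK₀side] at hsd
            omega
          have e2 : (if K₀ ∈ star d M (xn i') ∧ side i' K₀ = q i' - 1 then (1:ℝ) else 0)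
              = 1 := if_pos ⟨hK₀s, hK₀side⟩
          have e3 : (if i' = i' then (1:ℝ) else 0) = 1 := if_pos rfl
          have e4 : (if i' = i' then b ⟨(i', jj), hc⟩ else 0) = b ⟨(i', jj), hc⟩ := if_pos rfl
          rw [e1, e2, e3, e4]
          ring
        · have e3 : (if i' = i then (1:ℝ) else 0) = 0 := if_neg hpart
          have e4 : (if i' = i then b ⟨(i', jj), hc⟩ else 0) = 0 := if_neg hpart
          rw [e3, e4, mul_zero, mul_zero, neg_zero]
      have hfS : ∑ ij ∈ b.support.filter (fun ij => ij.1.1 = i), b ij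
          = ((b.support.filter (fun ij => ij.1.1 = i)).card : ℝ) * a i := by
        rw [Finset.sum_congr rfl (fun ij hij => ?_), Finset.sum_const, nsmul_eq_mul]
        obtain ⟨hsupp, hpart⟩ := Finset.mem_filter.mp hij
        rcases ij with ⟨⟨i', jj⟩, hc⟩
        dsimp only at hpart
        subst hpart
        exact hbj jj hc
      rw [hfS] at hS
      have hcard : (0:ℝ) ≤ ((b.support.filter (fun ij => ij.1.1 = i)).card : ℝ) := Nat.cast_nonneg _
      have h0 : a i * (1 + ((b.support.filter (fun ij => ij.1.1 = i)).card : ℝ)) = 0 := by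
        rw [mul_add, mul_one]
        nth_rewrite 1 [hS]
        ring
      rcases mul_eq_zero.mp h0 with h | h
      · exact h
      · linarith
    rw [← ha]
    exact Finset.sum_eq_zero fun i _ => by rw [hazero i, zero_smul]
  · -- characterization of continuity
    intro i lam
    constructor
    · rintro ⟨vcont, hvc, hveq⟩ j j'
      suffices hall : ∀ j : Fin (q i), lam j = vcont (xn i) by rw [hall j, hall j']
      intro j
      obtain ⟨K, hKs, hKside⟩ := hside_surj i (j : ℕ) j.2
      obtain ⟨hKM, hxi⟩ := hstar_mem _ _ hKs
      have hU : xn i ∈ ⋃ K ∈ M, shull d K := Set.mem_biUnion hKM hxi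
      have hcl : xn i ∈ closure (interior (shull d K)) :=
        dense_interior d K (hsimp K hKM).1 (hsimp K hKM).2 hxi
      have hne : (nhdsWithin (xn i) (interior (shull d K))).NeBot :=
        mem_closure_iff_nhdsWithin_neBot.mp hcl
      have hsubU : interior (shull d K) ⊆ ⋃ K ∈ M, shull d K :=
        interior_subset.trans (Set.subset_biUnion_of_mem hKM)
      have h1 : Filter.Tendsto vcont (nhdsWithin (xn i) (interior (shull d K)))
          (nhds (vcont (xn i))) :=
        (hvc (xn i) hU).mono_left (nhdsWithin_mono _ hsubU)
      have h2 : Filter.Tendsto (fun x => lam j * φ i x)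
          (nhdsWithin (xn i) (interior (shull d K))) (nhds (lam j * φ i (xn i))) :=
        ((continuousOn_const.mul (hφcont i K hKM)) (xn i) hxi).mono interior_subset
      have heqint : ∀ x ∈ interior (shull d K), vcont x = lam j * φ i x := by
        intro x hx
        rw [hveq x (Set.mem_biUnion hKM hx), hmaster i lam K hKM x hx, dif_pos hKs]
        congr 1
        congr 1
        exact Fin.ext hKside
      have h2' : Filter.Tendsto vcont (nhdsWithin (xn i) (interior (shull d K)))
          (nhds (lam j * φ i (xn i))) :=
        h2.congr' (eventually_nhdsWithin_of_forall fun x hx => (heqint x hx).symm)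
      have hfin := tendsto_nhds_unique h1 h2'
      rw [hφ_nodal i i, if_pos rfl, mul_one] at hfin
      exact hfin.symm
    · intro hall
      have hq1 : 0 < q i := hq_pos i
      refine ⟨fun x => lam ⟨0, hq1⟩ * φ i x, ?_, ?_⟩
      · have hre : (⋃ K ∈ M, shull d K) = ⋃ K : {K // K ∈ M}, shull d K.1 := by
          rw [Set.iUnion_subtype]
        rw [hre]
        apply LocallyFinite.continuousOn_iUnion
        · exact locallyFinite_of_finite _
        · intro K; exact isClosed_shull d K.1
        · intro K; exact continuousOn_const.mul (hφcont i K.1 K.2)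
      · intro x hx
        obtain ⟨K, hKM, hxK⟩ : ∃ K ∈ M, x ∈ interior (shull d K) := by simpa using hx
        show lam ⟨0, hq1⟩ * φ i x = _
        rw [hmaster i lam K hKM x hxK]
        by_cases hKs : K ∈ star d M (xn i)
        · rw [dif_pos hKs, hall ⟨0, hq1⟩ ⟨side i K, hside_lt i K hKs⟩]
        · rw [dif_neg hKs, hφ_supp i K hKM hKs x (interior_subset hxK), mul_zero]

end SplitBasis
end

section
/- Let Ω_h be a conforming mesh resolving Γ, and for a Lagrange node x̄_i ∈ Γ with q_i > 1 connected sides, suppose the star st(x̄_i) is face-connected (through all faces). Then for every side index j ∈ {1,…,q_i}, there exists a mesh element K* ∈ st(x̄_i; j) that possesses a face F with F ⊂ Γ and x̄_i ∈ F. -/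
open scoped Classical

/-- The convex hull of a finite vertex set. -/
def shull (d : ℕ) (K : Finset (EuclideanSpace ℝ (Fin d))) : Set (EuclideanSpace ℝ (Fin d)) :=
  convexHull ℝ (K : Set (EuclideanSpace ℝ (Fin d)))

/-- The star of a point `x` in the mesh `M`: the elements whose closed cell contains `x`. -/
noncomputable def star (d : ℕ) (M : Finset (Finset (EuclideanSpace ℝ (Fin d))))
    (x : EuclideanSpace ℝ (Fin d)) : Finset (Finset (EuclideanSpace ℝ (Fin d))) :=
  M.filter fun K => x ∈ shull d K

/-- Two elements of the star of `x` are on the same side of `Γ` if they are joined by a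
chain of elements of the star in which consecutive elements share a face not in `Γ_h`. -/
def SameSide (d : ℕ) (M : Finset (Finset (EuclideanSpace ℝ (Fin d))))
    (Γh : Finset (Finset (EuclideanSpace ℝ (Fin d)))) (x : EuclideanSpace ℝ (Fin d))
    (K K' : Finset (EuclideanSpace ℝ (Fin d))) : Prop :=
  Relation.ReflTransGen
    (fun A B => A ∈ star d M x ∧ B ∈ star d M x ∧ (A ∩ B).card = d ∧ (A ∩ B) ∉ Γh) K K'

/-- If the star of a Lagrange node `x` on `Γ` is face-connected (through arbitrary faces)
and has more than one side, then every side contains an element having a face `F ∈ Γ_h`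
with `x ∈ F`. -/
theorem side_has_gamma_face
    (d : ℕ) (hd : 1 ≤ d)
    (M : Finset (Finset (EuclideanSpace ℝ (Fin d))))
    (hsimp : ∀ K ∈ M, K.card = d + 1 ∧
      AffineIndependent ℝ (fun y : {y // y ∈ K} => (y : EuclideanSpace ℝ (Fin d))))
    (hconf : ∀ K ∈ M, ∀ K' ∈ M,
      shull d K ∩ shull d K' = shull d (K ∩ K'))
    (Γh : Finset (Finset (EuclideanSpace ℝ (Fin d))))
    (hΓh : ∀ F ∈ Γh, F.card = d ∧ ∃ K ∈ M, F ⊆ K)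
    (x : EuclideanSpace ℝ (Fin d))
    (hstar_conn : ∀ K ∈ star d M x, ∀ K' ∈ star d M x,
      Relation.ReflTransGen
        (fun A B => A ∈ star d M x ∧ B ∈ star d M x ∧ (A ∩ B).card = d) K K')
    (hmulti : ∃ K ∈ star d M x, ∃ K' ∈ star d M x, ¬ SameSide d M Γh x K K') :
    ∀ K ∈ star d M x, ∃ Kstar ∈ star d M x, SameSide d M Γh x K Kstar ∧
      ∃ F ∈ Γh, F ⊆ Kstar ∧ x ∈ shull d F := by
  intro K hK
  have hsymm : Symmetric (fun A B : Finset (EuclideanSpace ℝ (Fin d)) =>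
      A ∈ star d M x ∧ B ∈ star d M x ∧ (A ∩ B).card = d ∧ (A ∩ B) ∉ Γh) := by
    rintro A B ⟨h1, h2, h3, h4⟩
    exact ⟨h2, h1, by rwa [Finset.inter_comm], by rwa [Finset.inter_comm]⟩
  have hSsymm : Symmetric (SameSide d M Γh x) := fun a b h => (@Relation.ReflTransGen.symmetric _ _ ⟨hsymm⟩).symm a b h
  obtain ⟨K1, hK1, K2, hK2, h12⟩ := hmulti
  have hex : ∃ K' ∈ star d M x, ¬ SameSide d M Γh x K K' := by
    by_contra h
    push_neg at h
    exact h12 ((hSsymm (h K1 hK1)).trans (h K2 hK2))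
  obtain ⟨K', hK', hKK'⟩ := hex
  have hchain := hstar_conn K hK K' hK'
  have key : SameSide d M Γh x K K' ∨
      ∃ Kstar ∈ star d M x, SameSide d M Γh x K Kstar ∧
        ∃ F ∈ Γh, F ⊆ Kstar ∧ x ∈ shull d F := by
    clear hKK' hK'
    induction hchain with
    | refl => exact Or.inl Relation.ReflTransGen.refl
    | @tail b c hab hstep ih =>
      rcases ih with ih | ih
      · obtain ⟨hb, hc, hcard⟩ := hstep
        by_cases hF : (b ∩ c) ∈ Γh
        · right
          refine ⟨b, hb, ih, b ∩ c, hF, Finset.inter_subset_left, ?_⟩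
          have hbM : b ∈ M ∧ x ∈ shull d b := by
            simpa [_root_.star, Finset.mem_filter] using hb
          have hcM : c ∈ M ∧ x ∈ shull d c := by
            simpa [_root_.star, Finset.mem_filter] using hc
          have := hconf b hbM.1 c hcM.1
          rw [← this]
          exact ⟨hbM.2, hcM.2⟩
        · exact Or.inl (ih.tail ⟨hb, hc, hcard, hF⟩)
      · exact Or.inr ih
  rcases key with h | h
  · exact absurd h hKK'
  · exact h
end

section
/- Let X be a Hilbert space, Y ⊂ X a closed subspace, a : X × X → ℝ a bounded symmetric bilinear form which is coercive on Y, and let g ∈ X. Then there exists a unique u ∈ X with u − g ∈ Y and a(u, v) = 0 for all v ∈ Y. Moreover, if V ⊂ X is a closed subspace, V_0 := V ∩ Y, g_h ∈ V, and u_h ∈ V is the unique element with u_h − g_h ∈ V_0 and a(u_h, v_h) = 0 for all v_h ∈ V_0, then ‖u − u_h‖ ≤ C ( inf_{w_h ∈ V, w_h − g_h ∈ V_0} ‖u − w_h‖ ), where C depends only on the continuity and coercivity constants of a. -/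
/-!
Existence is the Lax–Milgram theorem on the closed subspace `Y`, a Hilbert space on which `a` is
coercive, applied to the unknown `u - g` and the right-hand side `-a(g, ·)`. Céa's lemma comes from
Galerkin orthogonality: `a(u - u_h, ·)` vanishes on `V ∩ Y`, so for an admissible `w_h`,
`α ‖u_h - w_h‖² ≤ a(u_h - w_h, u_h - w_h) = a(u - w_h, u_h - w_h) ≤ Cₐ ‖u - w_h‖ ‖u_h - w_h‖`,
and the triangle inequality gives `C = 1 + Cₐ / α`. Uniqueness is Céa's lemma with `w_h = u`.
-/

theorem IsCoercive.exists_forall_apply_eq {V : Type*} [NormedAddCommGroup V]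
    [InnerProductSpace ℝ V] [CompleteSpace V] {B : V →L[ℝ] V →L[ℝ] ℝ} (hB : IsCoercive B)
    (f : V →L[ℝ] ℝ) : ∃ u, ∀ w, B u w = f w := by
  refine ⟨hB.continuousLinearEquivOfBilin.symm ((InnerProductSpace.toDual ℝ V).symm f),
    fun w => ?_⟩
  rw [← hB.continuousLinearEquivOfBilin_apply, ContinuousLinearEquiv.apply_symm_apply,
    InnerProductSpace.toDual_symm_apply]

section

variable {X : Type*} [NormedAddCommGroup X] [InnerProductSpace ℝ X]

def IsAffineSolution (a : X →ₗ[ℝ] X →ₗ[ℝ] ℝ) (Z : Submodule ℝ X) (g u : X) : Prop :=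
  u - g ∈ Z ∧ ∀ v ∈ Z, a u v = 0

variable {a : X →ₗ[ℝ] X →ₗ[ℝ] ℝ} {Z : Submodule ℝ X} {Ca α : ℝ}

theorem exists_isAffineSolution [CompleteSpace X] (hZ : IsClosed (Z : Set X)) (hα : 0 < α)
    (hbdd : ∀ x y : X, |a x y| ≤ Ca * ‖x‖ * ‖y‖) (hcoer : ∀ z ∈ Z, α * ‖z‖ ^ 2 ≤ a z z)
    (g : X) : ∃ u, IsAffineSolution a Z g u := by
  have : CompleteSpace Z := hZ.completeSpace_coe
  let B : Z →L[ℝ] Z →L[ℝ] ℝ :=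
    (a.compl₁₂ Z.subtype Z.subtype).mkContinuous₂ Ca fun z w => hbdd z w
  let f : Z →L[ℝ] ℝ := (-(a g).comp Z.subtype).mkContinuous (Ca * ‖g‖) fun w => by
    simpa using hbdd g w
  have hB : IsCoercive B := ⟨α, hα, fun z => by
    rw [mul_assoc, ← sq]; exact hcoer z z.2⟩
  obtain ⟨z, hz⟩ := hB.exists_forall_apply_eq f
  refine ⟨g + z, by simp, fun v hv => ?_⟩
  have hzv : a z v = -a g v := hz ⟨v, hv⟩
  rw [map_add, LinearMap.add_apply, hzv, add_neg_cancel]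

theorem le_div_mul_of_mul_sq_le {d e Ca α : ℝ} (hα : 0 < α) (hCa : 0 ≤ Ca) (hd : 0 ≤ d)
    (he : 0 ≤ e) (h : α * d ^ 2 ≤ Ca * e * d) : d ≤ Ca / α * e := by
  rcases hd.eq_or_lt with rfl | hd
  · positivity
  · rw [div_mul_eq_mul_div, le_div_iff₀ hα, mul_comm]
    exact le_of_mul_le_mul_right (by linarith) hd

theorem IsAffineSolution.norm_sub_le {g_h u u_h w_h : X} (hα : 0 < α) (hCa : 0 ≤ Ca)
    (hbdd : ∀ x y : X, |a x y| ≤ Ca * ‖x‖ * ‖y‖) (hcoer : ∀ z ∈ Z, α * ‖z‖ ^ 2 ≤ a z z)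
    (huh : IsAffineSolution a Z g_h u_h) (hu : ∀ v ∈ Z, a u v = 0) (hw : w_h - g_h ∈ Z) :
    ‖u - u_h‖ ≤ (1 + Ca / α) * ‖u - w_h‖ := by
  have hd : u_h - w_h ∈ Z := by simpa using Z.sub_mem huh.1 hw
  have horth : a (u - u_h) (u_h - w_h) = 0 := by
    rw [LinearMap.map_sub₂, hu _ hd, huh.2 _ hd, sub_zero]
  have hsplit : a (u_h - w_h) (u_h - w_h) = a (u - w_h) (u_h - w_h) := by
    rw [← sub_add_sub_cancel u u_h w_h, LinearMap.map_add₂, horth, zero_add]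
  have hkey : α * ‖u_h - w_h‖ ^ 2 ≤ Ca * ‖u - w_h‖ * ‖u_h - w_h‖ :=
    (hcoer _ hd).trans (hsplit ▸ (le_abs_self _).trans (hbdd _ _))
  calc ‖u - u_h‖ ≤ ‖u - w_h‖ + ‖u_h - w_h‖ := by
        simpa only [norm_sub_rev w_h] using norm_sub_le_norm_sub_add_norm_sub u w_h u_h
    _ ≤ ‖u - w_h‖ + Ca / α * ‖u - w_h‖ := by
      gcongr; exact le_div_mul_of_mul_sq_le hα hCa (norm_nonneg _) (norm_nonneg _) hkey
    _ = (1 + Ca / α) * ‖u - w_h‖ := by ring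

theorem IsAffineSolution.eq {g u₁ u₂ : X} (hα : 0 < α) (hCa : 0 ≤ Ca)
    (hbdd : ∀ x y : X, |a x y| ≤ Ca * ‖x‖ * ‖y‖) (hcoer : ∀ z ∈ Z, α * ‖z‖ ^ 2 ≤ a z z)
    (h₁ : IsAffineSolution a Z g u₁) (h₂ : IsAffineSolution a Z g u₂) : u₁ = u₂ := by
  have h := h₂.norm_sub_le hα hCa hbdd hcoer h₁.2 h₁.1
  rw [sub_self, norm_zero, mul_zero] at h
  exact sub_eq_zero.mp (norm_le_zero_iff.mp h)

theorem existsUnique_isAffineSolution [CompleteSpace X] (hZ : IsClosed (Z : Set X))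
    (hα : 0 < α) (hCa : 0 ≤ Ca) (hbdd : ∀ x y : X, |a x y| ≤ Ca * ‖x‖ * ‖y‖)
    (hcoer : ∀ z ∈ Z, α * ‖z‖ ^ 2 ≤ a z z) (g : X) : ∃! u, IsAffineSolution a Z g u :=
  let ⟨u, hu⟩ := exists_isAffineSolution hZ hα hbdd hcoer g
  ⟨u, hu, fun _ hu' => hu'.eq hα hCa hbdd hcoer hu⟩

end

theorem elliptic_jump_wellposed_and_cea_general
    (X : Type*) [NormedAddCommGroup X] [InnerProductSpace ℝ X] [CompleteSpace X]
    (Y : Submodule ℝ X) (hYc : IsClosed (Y : Set X))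
    (a : X →ₗ[ℝ] X →ₗ[ℝ] ℝ)
    (Ca α : ℝ) (hCa : 0 < Ca) (hα : 0 < α)
    (hbdd : ∀ x y : X, |a x y| ≤ Ca * ‖x‖ * ‖y‖)
    (hcoer : ∀ y ∈ Y, α * ‖y‖ ^ 2 ≤ a y y) :
    ∃ C > 0, ∀ g : X,
      (∃! u : X, u - g ∈ Y ∧ ∀ v ∈ Y, a u v = 0) ∧
      ∀ V : Submodule ℝ X, IsClosed (V : Set X) → ∀ g_h ∈ V,
        (∃! u_h : X, u_h ∈ V ∧ u_h - g_h ∈ V ⊓ Y ∧ ∀ v_h ∈ V ⊓ Y, a u_h v_h = 0) ∧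
        ∀ u u_h : X,
          (u - g ∈ Y ∧ ∀ v ∈ Y, a u v = 0) →
          (u_h ∈ V ∧ u_h - g_h ∈ V ⊓ Y ∧ ∀ v_h ∈ V ⊓ Y, a u_h v_h = 0) →
          ∀ w_h ∈ V, w_h - g_h ∈ V ⊓ Y → ‖u - u_h‖ ≤ C * ‖u - w_h‖ := by
  have hcoerVY (V : Submodule ℝ X) : ∀ z ∈ V ⊓ Y, α * ‖z‖ ^ 2 ≤ a z z :=
    fun z hz => hcoer z hz.2
  refine ⟨1 + Ca / α, by positivity, fun g =>
    ⟨existsUnique_isAffineSolution hYc hα hCa.le hbdd hcoer g, fun V hV g_h hg_h => ⟨?_, ?_⟩⟩⟩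
  · obtain ⟨u_h, hu_h, huniq⟩ :=
      existsUnique_isAffineSolution (hV.inter hYc) hα hCa.le hbdd (hcoerVY V) g_h
    have hmem : u_h ∈ V := by simpa using V.add_mem hu_h.1.1 hg_h
    exact ⟨u_h, ⟨hmem, hu_h⟩, fun u' hu' => huniq u' hu'.2⟩
  · rintro u u_h ⟨-, hu⟩ ⟨-, hu_h⟩ w_h - hw_h
    exact IsAffineSolution.norm_sub_le hα hCa.le hbdd (hcoerVY V) hu_h
      (fun v hv => hu v hv.2) hw_h

/-- Abstract well-posedness and Céa-type quasi-optimality for the elliptic problem with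
prescribed jump: for a bounded symmetric bilinear form `a` on a Hilbert space `X`,
coercive on a closed subspace `Y`, and any `g ∈ X`, there is a unique `u` with
`u - g ∈ Y` and `a(u, ·) = 0` on `Y`; moreover, for any closed subspace `V`, any
`g_h ∈ V`, the Galerkin solution `u_h` exists and is unique, and
`‖u - u_h‖ ≤ C ‖u - w_h‖` for every admissible `w_h`, with `C` depending only on the
continuity and coercivity constants. -/
theorem elliptic_jump_wellposed_and_cea
    (X : Type*) [NormedAddCommGroup X] [InnerProductSpace ℝ X] [CompleteSpace X]
    (Y : Submodule ℝ X) (hYc : IsClosed (Y : Set X))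
    (a : X →ₗ[ℝ] X →ₗ[ℝ] ℝ)
    (hsymm : ∀ x y : X, a x y = a y x)
    (Ca α : ℝ) (hCa : 0 < Ca) (hα : 0 < α)
    (hbdd : ∀ x y : X, |a x y| ≤ Ca * ‖x‖ * ‖y‖)
    (hcoer : ∀ y ∈ Y, α * ‖y‖ ^ 2 ≤ a y y) :
    ∃ C > 0, ∀ g : X,
      (∃! u : X, u - g ∈ Y ∧ ∀ v ∈ Y, a u v = 0) ∧
      ∀ V : Submodule ℝ X, IsClosed (V : Set X) → ∀ g_h ∈ V,
        (∃! u_h : X, u_h ∈ V ∧ u_h - g_h ∈ V ⊓ Y ∧ ∀ v_h ∈ V ⊓ Y, a u_h v_h = 0) ∧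
        ∀ u u_h : X,
          (u - g ∈ Y ∧ ∀ v ∈ Y, a u v = 0) →
          (u_h ∈ V ∧ u_h - g_h ∈ V ⊓ Y ∧ ∀ v_h ∈ V ⊓ Y, a u_h v_h = 0) →
          ∀ w_h ∈ V, w_h - g_h ∈ V ⊓ Y → ‖u - u_h‖ ≤ C * ‖u - w_h‖ :=
  elliptic_jump_wellposed_and_cea_general X Y hYc a Ca α hCa hα hbdd hcoer
end
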